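/- arXiv:1510.05070 — 4 statements merged into one kernel-verified Lean document; each statement's English description precedes it below -/
import Mathlib

section
/- Let G be a graph on n vertices with m edges, let v be a vertex of G of degree at least 3, and let u_1, u_2, u_3 be three distinct neighbors of v. If the graph G' = G − {vu_1, vu_2, vu_3} obtained by deleting the three edges vu_1, vu_2, vu_3 is ⌊4n/3⌋-list-weighted-quasi-antimagic, then G is ⌊4n/3⌋-list-weighted-quasi-antimagic. (Consequently, a vertex of degree at least 3 is reducible for the property of being ⌊4n/3⌋-list-weighted-quasi-antimagic: no edge-minimal graph failing this property contains a vertex of degree at least 3.) -/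
/-!
Take a labeling `f` of `G' = G - {vu₁, vu₂, vu₃}` given by the hypothesis and put new labels
`xᵢ ∈ L(vuᵢ)` on the deleted edges: this adds `x₁ + x₂ + x₃` to the sum at `v`, `xᵢ` to the sum at
`uᵢ`, and changes nothing at the other `n - 4` vertices. Each `xᵢ` has to avoid the `m - 3`
labels of `f` and the `n - 4` values that would give `uᵢ` the sum of an untouched vertex, which
leaves `k - n + 7` candidates, and for each pair `i, j` a given `xᵢ` rules out at most three
values of `xⱼ`. Finally `x₁ + x₂ + x₃` has to avoid `n - 4` values. Choosing `x₁ = a` minimal,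
then `x₂ = b` minimal, `x₃ = c` maximal and `x₂ = b'` maximal, the totals `a + b + t`, `a + t + c`
and `t + b' + c` increase along a staircase and give `∑ |Aᵢ| - 20` distinct totals, which
exceeds `n - 4` once `3k ≥ 4n - 4`, as is the case for `k = ⌊4n/3⌋`.
-/

/-- The weighted vertex sum at `v`: the weight `ω v` plus the sum of the labels `f e`
over the edges `e` of `G` incident to `v`. -/
noncomputable def weightedSum {V : Type*} [Fintype V] (G : SimpleGraph V)
    (ω : V → ℝ) (f : Sym2 V → ℝ) (v : V) : ℝ :=
  ω v + ∑ e ∈ (G.incidenceSet v).toFinite.toFinset, f e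

/-- `G` is `k`-list-weighted-quasi-antimagic: for every vertex weighting `ω` and every
list assignment `L` giving each edge a list of at least `|E(G)| + k` real numbers, there
is an edge labeling `f` with `f e ∈ L e` on edges, with pairwise distinct labels on
edges, such that any two distinct vertices that both have degree at least `1` and are
not the two vertices of a `K₂` component receive distinct weighted vertex sums. -/
def ListWeightedQuasiAntimagic {V : Type*} [Fintype V] (G : SimpleGraph V) (k : ℕ) : Prop :=
  ∀ (ω : V → ℝ) (L : Sym2 V → Finset ℝ),
    (∀ e ∈ G.edgeSet, Nat.card G.edgeSet + k ≤ (L e).card) →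
    ∃ f : Sym2 V → ℝ,
      (∀ e ∈ G.edgeSet, f e ∈ L e) ∧
      (∀ e₁ ∈ G.edgeSet, ∀ e₂ ∈ G.edgeSet, e₁ ≠ e₂ → f e₁ ≠ f e₂) ∧
      (∀ u w : V, u ≠ w →
        1 ≤ Nat.card (G.neighborSet u) → 1 ≤ Nat.card (G.neighborSet w) →
        ¬(G.Adj u w ∧ Nat.card (G.neighborSet u) = 1 ∧ Nat.card (G.neighborSet w) = 1) →
        weightedSum G ω f u ≠ weightedSum G ω f w)

open Finset

section Staircase

def FewConflicts {α : Type*} (R : α → α → Prop) (r : ℕ) : Prop :=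
  (∀ x, ∃ s : Finset α, #s ≤ r ∧ ∀ y ∉ s, R x y) ∧
    ∀ y, ∃ s : Finset α, #s ≤ r ∧ ∀ x ∉ s, R x y

variable {α : Type*} [LinearOrder α]

lemma Finset.card_add_card_le_card_union_add_one {S T : Finset α}
    (h : ∀ x ∈ S, ∀ y ∈ T, x ≤ y) : #S + #T ≤ #(S ∪ T) + 1 := by
  rw [← card_union_add_card_inter]
  gcongr
  exact card_le_one.2 fun x hx y hy =>
    le_antisymm (h x (mem_inter.1 hx).1 y (mem_inter.1 hy).2)
      (h y (mem_inter.1 hy).1 x (mem_inter.1 hx).2)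

variable [AddCommMonoid α] [IsOrderedCancelAddMonoid α]

lemma exists_add_notMem_of_staircase {P : α → α → α → Prop} {a b b' c : α}
    {T₁ T₂ T₃ B : Finset α} (hbb' : b ≤ b') (h₃ : ∀ t ∈ T₃, P a b t ∧ t ≤ c)
    (h₂ : ∀ t ∈ T₂, P a t c ∧ b ≤ t ∧ t ≤ b') (h₁ : ∀ t ∈ T₁, P t b' c ∧ a ≤ t)
    (hB : #B + 2 < #T₁ + #T₂ + #T₃) : ∃ x₁ x₂ x₃, P x₁ x₂ x₃ ∧ x₁ + x₂ + x₃ ∉ B := by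
  set S₃ := T₃.image (a + b + ·)
  set S₂ := T₂.image (a + · + c)
  set S₁ := T₁.image (· + b' + c)
  have hS₃ : #S₃ = #T₃ := card_image_of_injective _ (add_right_injective _)
  have hS₂ : #S₂ = #T₂ := card_image_of_injective _
    fun t t' h => add_left_cancel (add_right_cancel h)
  have hS₁ : #S₁ = #T₁ := card_image_of_injective _
    fun t t' h => add_right_cancel (add_right_cancel h)
  have hS₃S₂ : ∀ x ∈ S₃, ∀ y ∈ S₂ ∪ S₁, x ≤ y := by
    simp only [S₁, S₂, S₃, mem_union, mem_image]
    rintro _ ⟨t, ht, rfl⟩ _ (⟨t', ht', rfl⟩ | ⟨t', ht', rfl⟩)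
    · gcongr
      exacts [(h₂ t' ht').2.1, (h₃ t ht).2]
    · gcongr
      exacts [(h₁ t' ht').2, (h₃ t ht).2]
  have hS₂S₁ : ∀ x ∈ S₂, ∀ y ∈ S₁, x ≤ y := by
    simp only [S₁, S₂, mem_image]
    rintro _ ⟨t, ht, rfl⟩ _ ⟨t', ht', rfl⟩
    gcongr
    exacts [(h₁ t' ht').2, (h₂ t ht).2.2]
  -- The three families of sums overlap in at most the two corners `a + b + c` and `a + b' + c`.
  obtain ⟨σ, hσ, hσB⟩ := exists_mem_notMem_of_card_lt_card (s := B) (t := S₃ ∪ (S₂ ∪ S₁)) (by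
    have := card_add_card_le_card_union_add_one hS₃S₂
    have := card_add_card_le_card_union_add_one hS₂S₁
    omega)
  simp only [S₁, S₂, S₃, mem_union, mem_image] at hσ
  rcases hσ with ⟨t, ht, rfl⟩ | ⟨t, ht, rfl⟩ | ⟨t, ht, rfl⟩
  exacts [⟨_, _, _, (h₃ t ht).1, hσB⟩, ⟨_, _, _, (h₂ t ht).1, hσB⟩, ⟨_, _, _, (h₁ t ht).1, hσB⟩]

theorem exists_triple_add_notMem {R₁₂ R₁₃ R₂₃ : α → α → Prop} {r : ℕ}
    (h₁₂ : FewConflicts R₁₂ r) (h₁₃ : FewConflicts R₁₃ r) (h₂₃ : FewConflicts R₂₃ r)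
    {A₁ A₂ A₃ B : Finset α} (hA₁ : A₁.Nonempty) (hA₂ : 2 * r < #A₂) (hA₃ : 2 * r < #A₃)
    (hB : #B + 6 * r + 3 ≤ #A₁ + #A₂ + #A₃) :
    ∃ x₁ ∈ A₁, ∃ x₂ ∈ A₂, ∃ x₃ ∈ A₃,
      R₁₂ x₁ x₂ ∧ R₁₃ x₁ x₃ ∧ R₂₃ x₂ x₃ ∧ x₁ + x₂ + x₃ ∉ B := by
  choose K₁₂ hK₁₂ hR₁₂ using h₁₂.1
  choose K₂₁ hK₂₁ hR₂₁ using h₁₂.2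
  choose K₁₃ hK₁₃ hR₁₃ using h₁₃.1
  choose K₃₁ hK₃₁ hR₃₁ using h₁₃.2
  choose K₂₃ hK₂₃ hR₂₃ using h₂₃.1
  choose K₃₂ hK₃₂ hR₃₂ using h₂₃.2
  have card_sdiff (A K : Finset α) (k : ℕ) (hK : #K ≤ k) : #A - k ≤ #(A \ K) :=
    (le_card_sdiff K A).trans' (by omega)
  have card_union (K K' : Finset α) (hK : #K ≤ r) (hK' : #K' ≤ r) : #(K ∪ K') ≤ 2 * r :=
    (card_union_le _ _).trans (by omega)
  set a := A₁.min' hA₁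
  set A₂' := A₂ \ K₁₂ a
  have hA₂' : #A₂ - r ≤ #A₂' := card_sdiff _ _ _ (hK₁₂ a)
  set b := A₂'.min' (card_pos.1 (by omega))
  set A₃' := A₃ \ (K₁₃ a ∪ K₂₃ b)
  have hA₃' : #A₃ - 2 * r ≤ #A₃' := card_sdiff _ _ _ (card_union _ _ (hK₁₃ a) (hK₂₃ b))
  set c := A₃'.max' (card_pos.1 (by omega))
  set A₂'' := A₂' \ K₃₂ c
  have hA₂'' : #A₂ - 2 * r ≤ #A₂'' := (card_sdiff _ _ _ (hK₃₂ c)).trans' (by omega)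
  set b' := A₂''.max' (card_pos.1 (by omega))
  set A₁'' := A₁ \ (K₂₁ b' ∪ K₃₁ c)
  have hA₁'' : #A₁ - 2 * r ≤ #A₁'' := card_sdiff _ _ _ (card_union _ _ (hK₂₁ b') (hK₃₁ c))
  have hb : b ∈ A₂ ∧ b ∉ K₁₂ a := mem_sdiff.1 (min'_mem _ _)
  have hc : c ∈ A₃ ∧ c ∉ K₁₃ a ∪ K₂₃ b := mem_sdiff.1 (max'_mem _ _)
  have hb' : b' ∈ A₂' ∧ b' ∉ K₃₂ c := mem_sdiff.1 (max'_mem _ _)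
  simp only [mem_union, not_or] at hc
  obtain ⟨x₁, x₂, x₃, ⟨hx₁, hx₂, hx₃, hR⟩, hσ⟩ :=
    exists_add_notMem_of_staircase (P := fun x₁ x₂ x₃ => x₁ ∈ A₁ ∧ x₂ ∈ A₂ ∧ x₃ ∈ A₃ ∧
        R₁₂ x₁ x₂ ∧ R₁₃ x₁ x₃ ∧ R₂₃ x₂ x₃) (a := a) (b := b) (b' := b') (c := c)
      (T₁ := A₁'') (T₂ := A₂'') (T₃ := A₃') (B := B) (min'_le _ _ hb'.1)
      (fun t ht => by
        obtain ⟨ht₃, ht⟩ := mem_sdiff.1 ht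
        rw [mem_union, not_or] at ht
        exact ⟨⟨min'_mem _ _, hb.1, ht₃, hR₁₂ _ _ hb.2, hR₁₃ _ _ ht.1, hR₂₃ _ _ ht.2⟩,
          le_max' _ _ (mem_sdiff.2 ⟨ht₃, by simp [ht]⟩)⟩)
      (fun t ht => by
        obtain ⟨ht₂, htc⟩ := mem_sdiff.1 ht
        exact ⟨⟨min'_mem _ _, (mem_sdiff.1 ht₂).1, hc.1, hR₁₂ _ _ (mem_sdiff.1 ht₂).2,
          hR₁₃ _ _ hc.2.1, hR₃₂ _ _ htc⟩, min'_le _ _ ht₂, le_max' _ _ ht⟩)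
      (fun t ht => by
        obtain ⟨ht₁, ht⟩ := mem_sdiff.1 ht
        rw [mem_union, not_or] at ht
        exact ⟨⟨ht₁, (mem_sdiff.1 hb'.1).1, hc.1, hR₂₁ _ _ ht.1, hR₃₁ _ _ ht.2,
          hR₃₂ _ _ hb'.2⟩, min'_le _ _ ht₁⟩)
      (by omega)
  exact ⟨x₁, hx₁, x₂, hx₂, x₃, hx₃, hR.1, hR.2.1, hR.2.2, hσ⟩

end Staircase

lemma fewConflicts_star (p qᵢ qⱼ qₖ : ℝ) :
    FewConflicts (fun x y : ℝ => x ≠ y ∧ qᵢ + x ≠ qⱼ + y ∧ p + x + y ≠ qₖ) 3 := by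
  refine ⟨fun x => ⟨{x, qᵢ + x - qⱼ, qₖ - p - x}, card_le_three, fun y hy => ?_⟩,
    fun y => ⟨{y, qⱼ + y - qᵢ, qₖ - p - y}, card_le_three, fun x hx => ?_⟩⟩
  · simp only [mem_insert, mem_singleton, not_or] at hy
    exact ⟨Ne.symm hy.1, fun h => hy.2.1 (by linarith), fun h => hy.2.2 (by linarith)⟩
  · simp only [mem_insert, mem_singleton, not_or] at hx
    exact ⟨hx.1, fun h => hx.2.1 (by linarith), fun h => hx.2.2 (by linarith)⟩

lemma notMem_of_mem_sdiff_image_sub {A B : Finset ℝ} {q x : ℝ} (hx : x ∈ A \ B.image (· - q)) :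
    q + x ∉ B :=
  fun h => (mem_sdiff.1 hx).2 (mem_image.2 ⟨q + x, h, add_sub_cancel_left q x⟩)

theorem exists_star_labels {A₁ A₂ A₃ B : Finset ℝ} {ℓ : ℕ} (p q₁ q₂ q₃ : ℝ) (h₁ : ℓ ≤ #A₁)
    (h₂ : ℓ ≤ #A₂) (h₃ : ℓ ≤ #A₃) (hB : 4 * #B + 21 ≤ 3 * ℓ) :
    ∃ x₁ ∈ A₁, ∃ x₂ ∈ A₂, ∃ x₃ ∈ A₃, [x₁, x₂, x₃].Nodup ∧
      [p + x₁ + x₂ + x₃, q₁ + x₁, q₂ + x₂, q₃ + x₃].Nodup ∧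
      ∀ y ∈ [p + x₁ + x₂ + x₃, q₁ + x₁, q₂ + x₂, q₃ + x₃], y ∉ B := by
  have hA (A : Finset ℝ) (q : ℝ) : #A - #B ≤ #(A \ B.image (· - q)) :=
    (le_card_sdiff _ _).trans' (Nat.sub_le_sub_left card_image_le _)
  have := hA A₁ q₁
  have := hA A₂ q₂
  have := hA A₃ q₃
  -- The relation for the pair `i, j` gathers the constraints involving only `xᵢ` and `xⱼ`:
  -- distinct labels, distinct sums at `uᵢ` and `uⱼ`, and distinct sums at `v` and `uₖ`.
  obtain ⟨x₁, hx₁, x₂, hx₂, x₃, hx₃, h₁₂, h₁₃, h₂₃, hσ⟩ :=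
    exists_triple_add_notMem (fewConflicts_star p q₁ q₂ q₃) (fewConflicts_star p q₁ q₃ q₂)
      (fewConflicts_star p q₂ q₃ q₁) (A₁ := A₁ \ B.image (· - q₁))
      (A₂ := A₂ \ B.image (· - q₂)) (A₃ := A₃ \ B.image (· - q₃)) (B := B.image (· - p))
      (card_pos.1 (by omega)) (by omega) (by omega)
      (by have := card_image_le (s := B) (f := (· - p)); omega)
  refine ⟨x₁, (mem_sdiff.1 hx₁).1, x₂, (mem_sdiff.1 hx₂).1, x₃, (mem_sdiff.1 hx₃).1,
    ?_, ?_, ?_⟩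
  · simp [h₁₂.1, h₁₃.1, h₂₃.1]
  · simp only [List.nodup_cons, List.mem_cons, List.not_mem_nil]
    grind
  · simp only [List.mem_cons, List.not_mem_nil, forall_eq_or_imp]
    exact ⟨fun h => hσ (mem_image.2 ⟨_, h, by ring⟩), notMem_of_mem_sdiff_image_sub hx₁,
      notMem_of_mem_sdiff_image_sub hx₂, notMem_of_mem_sdiff_image_sub hx₃, by simp⟩

namespace SimpleGraph

variable {V : Type*} (G : SimpleGraph V)

lemma deleteEdges_adj_of_forall_notMem {s : Set (Sym2 V)} {a : V} (ha : ∀ e ∈ s, a ∉ e)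
    (b : V) : (G.deleteEdges s).Adj a b ↔ G.Adj a b := by
  simpa using fun _ hs => ha _ hs (Sym2.mem_mk_left a b)

lemma neighborSet_deleteEdges_of_forall_notMem {s : Set (Sym2 V)} {a : V}
    (ha : ∀ e ∈ s, a ∉ e) : (G.deleteEdges s).neighborSet a = G.neighborSet a :=
  Set.ext (G.deleteEdges_adj_of_forall_notMem ha)

lemma card_edgeSet_deleteEdges_add [Finite V] {s : Finset (Sym2 V)} (hs : ↑s ⊆ G.edgeSet) :
    Nat.card (G.deleteEdges ↑s).edgeSet + #s = Nat.card G.edgeSet := by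
  rw [Nat.card_coe_set_eq, Nat.card_coe_set_eq, edgeSet_deleteEdges,
    Set.ncard_sdiff hs, Set.ncard_coe_finset]
  have := Set.ncard_coe_finset s ▸ Set.ncard_le_ncard hs
  omega

end SimpleGraph

section weightedSum

variable {V : Type*} [Fintype V] (G : SimpleGraph V) (ω : V → ℝ)

lemma weightedSum_congr {f g : Sym2 V → ℝ} {w : V} (h : ∀ e ∈ G.incidenceSet w, f e = g e) :
    weightedSum G ω f w = weightedSum G ω g w := by
  unfold weightedSum
  congr 1
  exact sum_congr rfl fun e he => h e (by simpa using he)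

lemma weightedSum_eq_deleteEdges_add [DecidableEq V] {s : Finset (Sym2 V)}
    (hs : ↑s ⊆ G.edgeSet) {f g : Sym2 V → ℝ} (hgf : ∀ e ∉ s, g e = f e) (w : V) :
    weightedSum G ω g w = weightedSum (G.deleteEdges ↑s) ω f w + ∑ e ∈ s with w ∈ e, g e := by
  have hG' : ∀ e ∈ (G.deleteEdges ↑s).incidenceSet w, g e = f e := fun e he =>
    hgf e ((G.edgeSet_deleteEdges _ ▸ he.1).2)
  rw [← weightedSum_congr _ _ hG', weightedSum, weightedSum, add_assoc, ← sum_union]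
  · congr 2
    ext e
    simp only [Set.Finite.mem_toFinset, mem_union, mem_filter, SimpleGraph.incidenceSet,
      SimpleGraph.edgeSet_deleteEdges, Set.mem_ofPred_eq, Set.mem_sdiff, mem_coe]
    constructor
    · rintro ⟨he, hw⟩
      by_cases h : e ∈ s <;> simp [*]
    · rintro (⟨⟨he, -⟩, hw⟩ | ⟨he, hw⟩)
      exacts [⟨he, hw⟩, ⟨hs he, hw⟩]
  · rw [disjoint_left]
    intro e he he'
    simp only [Set.Finite.mem_toFinset, SimpleGraph.incidenceSet, SimpleGraph.edgeSet_deleteEdges,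
      Set.mem_ofPred_eq, Set.mem_sdiff, mem_coe, mem_filter] at he he'
    exact he.1.2 he'.1

end weightedSum

section Labeling

variable {V : Type*} [Fintype V]

def IsQuasiAntimagicLabeling (G : SimpleGraph V) (ω : V → ℝ) (L : Sym2 V → Finset ℝ)
    (f : Sym2 V → ℝ) : Prop :=
  (∀ e ∈ G.edgeSet, f e ∈ L e) ∧
    (∀ e₁ ∈ G.edgeSet, ∀ e₂ ∈ G.edgeSet, e₁ ≠ e₂ → f e₁ ≠ f e₂) ∧
    ∀ u w : V, u ≠ w →
      1 ≤ Nat.card (G.neighborSet u) → 1 ≤ Nat.card (G.neighborSet w) →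
      ¬(G.Adj u w ∧ Nat.card (G.neighborSet u) = 1 ∧ Nat.card (G.neighborSet w) = 1) →
      weightedSum G ω f u ≠ weightedSum G ω f w

lemma listWeightedQuasiAntimagic_iff {G : SimpleGraph V} {k : ℕ} :
    ListWeightedQuasiAntimagic G k ↔ ∀ (ω : V → ℝ) (L : Sym2 V → Finset ℝ),
      (∀ e ∈ G.edgeSet, Nat.card G.edgeSet + k ≤ #(L e)) →
      ∃ f, IsQuasiAntimagicLabeling G ω L f :=
  Iff.rfl

variable [DecidableEq V] {G : SimpleGraph V} {ω : V → ℝ} {L : Sym2 V → Finset ℝ}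
  {s : Finset (Sym2 V)} {f g : Sym2 V → ℝ}

theorem IsQuasiAntimagicLabeling.of_deleteEdges (hs : ↑s ⊆ G.edgeSet)
    (hf : IsQuasiAntimagicLabeling (G.deleteEdges ↑s) ω L f) (hgf : ∀ e ∉ s, g e = f e)
    (hgL : ∀ e ∈ s, g e ∈ L e) (hginj : Set.InjOn g s)
    (hgf' : ∀ e ∈ s, g e ∉ f '' (G.deleteEdges ↑s).edgeSet)
    (hT : ∀ t t', (∃ e ∈ s, t ∈ e) → (∃ e ∈ s, t' ∈ e) → t ≠ t' →
      weightedSum G ω g t ≠ weightedSum G ω g t')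
    (hTW : ∀ t w, (∃ e ∈ s, t ∈ e) → (∀ e ∈ s, w ∉ e) →
      weightedSum G ω g t ≠ weightedSum (G.deleteEdges ↑s) ω f w) :
    IsQuasiAntimagicLabeling G ω L g := by
  obtain ⟨hfL, hfinj, hfsum⟩ := hf
  have hE : ∀ e ∈ G.edgeSet, e ∉ s → e ∈ (G.deleteEdges ↑s).edgeSet := fun e he hes => by
    simp [SimpleGraph.edgeSet_deleteEdges, he, hes]
  refine ⟨fun e he => ?_, fun e₁ he₁ e₂ he₂ hne => ?_, fun u w huw hu hw hK => ?_⟩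
  · by_cases h : e ∈ s
    · exact hgL e h
    · rw [hgf e h]
      exact hfL e (hE e he h)
  · by_cases h₁ : e₁ ∈ s <;> by_cases h₂ : e₂ ∈ s
    · exact fun h => hne (hginj h₁ h₂ h)
    · rw [hgf e₂ h₂]
      exact fun h => hgf' e₁ h₁ ⟨e₂, hE e₂ he₂ h₂, h.symm⟩
    · rw [hgf e₁ h₁]
      exact fun h => hgf' e₂ h₂ ⟨e₁, hE e₁ he₁ h₁, h⟩
    · rw [hgf e₁ h₁, hgf e₂ h₂]
      exact hfinj e₁ (hE e₁ he₁ h₁) e₂ (hE e₂ he₂ h₂) hne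
  have hsum : ∀ x, (∀ e ∈ s, x ∉ e) →
      weightedSum G ω g x = weightedSum (G.deleteEdges ↑s) ω f x := fun x hx => by
    rw [weightedSum_eq_deleteEdges_add G ω hs hgf, filter_false_of_mem hx, sum_empty, add_zero]
  by_cases hu' : ∃ e ∈ s, u ∈ e <;> by_cases hw' : ∃ e ∈ s, w ∈ e
  · exact hT u w hu' hw' huw
  · push Not at hw'
    rw [hsum w hw']
    exact hTW u w hu' hw'
  · push Not at hu'
    rw [hsum u hu']
    exact (hTW w u hw' hu').symm
  · push Not at hu' hw'
    have hnu := G.neighborSet_deleteEdges_of_forall_notMem hu'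
    have hnw := G.neighborSet_deleteEdges_of_forall_notMem hw'
    rw [hsum u hu', hsum w hw']
    refine hfsum u w huw (by rwa [hnu]) (by rwa [hnw]) ?_
    rwa [hnu, hnw, G.deleteEdges_adj_of_forall_notMem hu']

end Labeling

section Star

variable {V : Type*} [DecidableEq V] {G : SimpleGraph V} {v u₁ u₂ u₃ : V} {s : Finset (Sym2 V)}

lemma exists_mem_star_iff (hs : s = {s(v, u₁), s(v, u₂), s(v, u₃)}) (t : V) :
    (∃ e ∈ s, t ∈ e) ↔ t ∈ [v, u₁, u₂, u₃] := by
  simp only [hs, mem_insert, mem_singleton, exists_eq_or_imp, exists_eq_left, Sym2.mem_iff,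
    List.mem_cons, List.not_mem_nil, or_false]
  tauto

lemma star_subset_edgeSet (hs : s = {s(v, u₁), s(v, u₂), s(v, u₃)}) (h1 : G.Adj v u₁)
    (h2 : G.Adj v u₂) (h3 : G.Adj v u₃) : ↑s ⊆ G.edgeSet := by
  simp [hs, Set.insert_subset_iff, h1, h2, h3]

variable [Fintype V]

lemma card_edgeSet_deleteEdges_star (hs : s = {s(v, u₁), s(v, u₂), s(v, u₃)})
    (h1 : G.Adj v u₁) (h2 : G.Adj v u₂) (h3 : G.Adj v u₃)
    (h12 : u₁ ≠ u₂) (h13 : u₁ ≠ u₃) (h23 : u₂ ≠ u₃) :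
    Nat.card (G.deleteEdges ↑s).edgeSet + 3 = Nat.card G.edgeSet := by
  have hcard : #s = 3 := by
    rw [hs, card_insert_of_notMem (by simp [h12, h13, (G.ne_of_adj h1).symm]),
      card_pair (by simp [h23, (G.ne_of_adj h2).symm])]
  simpa [hcard] using G.card_edgeSet_deleteEdges_add (star_subset_edgeSet hs h1 h2 h3)

lemma map_weightedSum_star (hs : s = {s(v, u₁), s(v, u₂), s(v, u₃)})
    (h1 : G.Adj v u₁) (h2 : G.Adj v u₂) (h3 : G.Adj v u₃)
    (h12 : u₁ ≠ u₂) (h13 : u₁ ≠ u₃) (h23 : u₂ ≠ u₃) (ω : V → ℝ) {f g : Sym2 V → ℝ}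
    (hgf : ∀ e ∉ s, g e = f e) :
    [v, u₁, u₂, u₃].map (weightedSum G ω g) =
      [weightedSum (G.deleteEdges s) ω f v + g s(v, u₁) + g s(v, u₂) + g s(v, u₃),
        weightedSum (G.deleteEdges s) ω f u₁ + g s(v, u₁),
        weightedSum (G.deleteEdges s) ω f u₂ + g s(v, u₂),
        weightedSum (G.deleteEdges s) ω f u₃ + g s(v, u₃)] := by
  have hv₁ := G.ne_of_adj h1
  have hv₂ := G.ne_of_adj h2
  have hv₃ := G.ne_of_adj h3
  simp only [List.map_cons, List.map_nil,
    weightedSum_eq_deleteEdges_add G ω (star_subset_edgeSet hs h1 h2 h3) hgf]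
  simp [hs, filter_insert, filter_singleton, h12, h13, h23, hv₁, hv₂, hv₃, h12.symm, h13.symm,
    h23.symm, hv₁.symm, hv₂.symm, hv₃.symm, add_assoc]

theorem IsQuasiAntimagicLabeling.exists_extend_star (hs : s = {s(v, u₁), s(v, u₂), s(v, u₃)})
    (h1 : G.Adj v u₁) (h2 : G.Adj v u₂) (h3 : G.Adj v u₃)
    (h12 : u₁ ≠ u₂) (h13 : u₁ ≠ u₃) (h23 : u₂ ≠ u₃) {ω : V → ℝ} {L : Sym2 V → Finset ℝ}
    {f : Sym2 V → ℝ} (hf : IsQuasiAntimagicLabeling (G.deleteEdges s) ω L f) {x₁ x₂ x₃ : ℝ}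
    (hxL : x₁ ∈ L s(v, u₁) ∧ x₂ ∈ L s(v, u₂) ∧ x₃ ∈ L s(v, u₃))
    (hxf : ∀ x ∈ [x₁, x₂, x₃], x ∉ f '' (G.deleteEdges s).edgeSet) (hx : [x₁, x₂, x₃].Nodup)
    (hval : [weightedSum (G.deleteEdges s) ω f v + x₁ + x₂ + x₃,
      weightedSum (G.deleteEdges s) ω f u₁ + x₁, weightedSum (G.deleteEdges s) ω f u₂ + x₂,
      weightedSum (G.deleteEdges s) ω f u₃ + x₃].Nodup)
    (hvalB : ∀ w ∉ [v, u₁, u₂, u₃], weightedSum (G.deleteEdges s) ω f w ∉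
      [weightedSum (G.deleteEdges s) ω f v + x₁ + x₂ + x₃,
        weightedSum (G.deleteEdges s) ω f u₁ + x₁, weightedSum (G.deleteEdges s) ω f u₂ + x₂,
        weightedSum (G.deleteEdges s) ω f u₃ + x₃]) :
    ∃ g, IsQuasiAntimagicLabeling G ω L g := by
  let g : Sym2 V → ℝ := fun e => if e = s(v, u₁) then x₁ else if e = s(v, u₂) then x₂ else
    if e = s(v, u₃) then x₃ else f e
  have hgf : ∀ e ∉ s, g e = f e := by
    intro e he
    simp only [hs, mem_insert, mem_singleton, not_or] at he
    simp [g, he]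
  have hg : [s(v, u₁), s(v, u₂), s(v, u₃)].map g = [x₁, x₂, x₃] := by
    simp [g, h12.symm, h13.symm, h23.symm, G.ne_of_adj h1, G.ne_of_adj h2]
  have hsums := map_weightedSum_star hs h1 h2 h3 h12 h13 h23 ω hgf
  have hs' (e : Sym2 V) : e ∈ s ↔ e ∈ [s(v, u₁), s(v, u₂), s(v, u₃)] := by simp [hs]
  simp only [List.map_cons, List.map_nil, List.cons.injEq] at hg
  rw [hg.1, hg.2.1, hg.2.2.1] at hsums
  refine ⟨g, hf.of_deleteEdges (star_subset_edgeSet hs h1 h2 h3) hgf ?_ ?_ ?_ ?_ ?_⟩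
  · intro e he
    obtain rfl | rfl | rfl : e = s(v, u₁) ∨ e = s(v, u₂) ∨ e = s(v, u₃) := by simpa [hs] using he
    exacts [hg.1 ▸ hxL.1, hg.2.1 ▸ hxL.2.1, hg.2.2.1 ▸ hxL.2.2]
  · intro e he e' he' h
    exact List.inj_on_of_nodup_map (by simpa [hg] using hx) ((hs' e).1 he) ((hs' e').1 he') h
  · intro e he
    obtain rfl | rfl | rfl : e = s(v, u₁) ∨ e = s(v, u₂) ∨ e = s(v, u₃) := by simpa [hs] using he
    exacts [hg.1 ▸ hxf x₁ (by simp), hg.2.1 ▸ hxf x₂ (by simp), hg.2.2.1 ▸ hxf x₃ (by simp)]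
  · intro t t' ht ht' hne h
    exact hne (List.inj_on_of_nodup_map (hsums ▸ hval) ((exists_mem_star_iff hs t).1 ht)
      ((exists_mem_star_iff hs t').1 ht') h)
  · intro t w ht hw h
    refine hvalB w (fun hw' => ?_)
      (h ▸ hsums ▸ List.mem_map_of_mem ((exists_mem_star_iff hs t).1 ht))
    obtain ⟨e, he, hwe⟩ := (exists_mem_star_iff hs w).2 hw'
    exact hw e he hwe

theorem exists_isQuasiAntimagicLabeling_of_deleteEdges_star
    (hs : s = {s(v, u₁), s(v, u₂), s(v, u₃)}) (h1 : G.Adj v u₁) (h2 : G.Adj v u₂)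
    (h3 : G.Adj v u₃) (h12 : u₁ ≠ u₂) (h13 : u₁ ≠ u₃) (h23 : u₂ ≠ u₃) {ω : V → ℝ}
    {L : Sym2 V → Finset ℝ} {f : Sym2 V → ℝ} {ℓ : ℕ}
    (hf : IsQuasiAntimagicLabeling (G.deleteEdges s) ω L f)
    (hL : ∀ e ∈ G.edgeSet, Nat.card (G.deleteEdges s).edgeSet + ℓ ≤ #(L e))
    (hℓ : 4 * Fintype.card V + 5 ≤ 3 * ℓ) :
    ∃ g, IsQuasiAntimagicLabeling G ω L g := by
  set S := weightedSum (G.deleteEdges s) ω f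
  set E' := (G.deleteEdges s).edgeSet
  set F := (E'.toFinite.image f).toFinset
  set T := [v, u₁, u₂, u₃].toFinset
  have hT : #T = 4 := List.toFinset_card_of_nodup <| by
    simp [h12, h13, h23, G.ne_of_adj h1, G.ne_of_adj h2, G.ne_of_adj h3]
  have hB : 4 * #(Tᶜ.image S) + 21 ≤ 3 * ℓ := by
    have := card_image_le (s := Tᶜ) (f := S)
    have := card_le_univ T
    rw [card_compl, hT] at *
    omega
  have hA : ∀ e ∈ G.edgeSet, ℓ ≤ #(L e \ F) := fun e he =>
    (le_card_sdiff _ _).trans' <| by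
      have : #F ≤ Nat.card E' := by
        rw [← Set.ncard_eq_toFinset_card _, Nat.card_coe_set_eq]
        exact Set.ncard_image_le E'.toFinite
      have := hL e he
      omega
  obtain ⟨x₁, hx₁, x₂, hx₂, x₃, hx₃, hx, hval, hvalB⟩ := exists_star_labels (S v) (S u₁) (S u₂)
    (S u₃) (hA _ (G.mem_edgeSet.2 h1)) (hA _ (G.mem_edgeSet.2 h2)) (hA _ (G.mem_edgeSet.2 h3)) hB
  simp only [mem_sdiff, F, Set.Finite.mem_toFinset] at hx₁ hx₂ hx₃
  refine hf.exists_extend_star hs h1 h2 h3 h12 h13 h23 ⟨hx₁.1, hx₂.1, hx₃.1⟩ (fun x hx => ?_) hx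
    hval fun w hw hwB => hvalB _ hwB (mem_image_of_mem S (by simpa [T] using hw))
  simp only [List.mem_cons, List.not_mem_nil, or_false] at hx
  rcases hx with rfl | rfl | rfl
  exacts [hx₁.2, hx₂.2, hx₃.2]

end Star

theorem statement_4_general {V : Type*} [Fintype V] (G : SimpleGraph V) (v u₁ u₂ u₃ : V)
    (h1 : G.Adj v u₁) (h2 : G.Adj v u₂) (h3 : G.Adj v u₃)
    (h12 : u₁ ≠ u₂) (h13 : u₁ ≠ u₃) (h23 : u₂ ≠ u₃)
    (hG' : ListWeightedQuasiAntimagic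
      (G.deleteEdges {s(v, u₁), s(v, u₂), s(v, u₃)}) ((4 * Fintype.card V) / 3)) :
    ListWeightedQuasiAntimagic G ((4 * Fintype.card V) / 3) := by
  classical
  set s : Finset (Sym2 V) := {s(v, u₁), s(v, u₂), s(v, u₃)} with hs
  rw [show ({s(v, u₁), s(v, u₂), s(v, u₃)} : Set (Sym2 V)) = ↑s by simp [s],
    listWeightedQuasiAntimagic_iff] at hG'
  rw [listWeightedQuasiAntimagic_iff]
  intro ω L hL
  have hm := card_edgeSet_deleteEdges_star hs h1 h2 h3 h12 h13 h23
  obtain ⟨f, hf⟩ := hG' ω L fun e he =>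
    (hL e (G.edgeSet_deleteEdges _ ▸ he).1).trans' (by omega)
  exact exists_isQuasiAntimagicLabeling_of_deleteEdges_star hs h1 h2 h3 h12 h13 h23 hf
    (ℓ := 4 * Fintype.card V / 3 + 3) (fun e he => (hL e he).trans' (by omega)) (by omega)

/-- Reducibility of a vertex of degree at least `3`: if `v` has degree at least `3`
with distinct neighbors `u₁, u₂, u₃`, and the graph `G'` obtained from `G` by deleting
the three edges `vu₁, vu₂, vu₃` is `⌊4n/3⌋`-list-weighted-quasi-antimagic, then so
is `G`. -/
theorem statement_4 {V : Type*} [Fintype V] (G : SimpleGraph V) (v u₁ u₂ u₃ : V)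
    (hdeg : 3 ≤ Nat.card (G.neighborSet v))
    (h1 : G.Adj v u₁) (h2 : G.Adj v u₂) (h3 : G.Adj v u₃)
    (h12 : u₁ ≠ u₂) (h13 : u₁ ≠ u₃) (h23 : u₂ ≠ u₃)
    (hG' : ListWeightedQuasiAntimagic
      (G.deleteEdges {s(v, u₁), s(v, u₂), s(v, u₃)}) ((4 * Fintype.card V) / 3)) :
    ListWeightedQuasiAntimagic G ((4 * Fintype.card V) / 3) :=
  statement_4_general G v u₁ u₂ u₃ h1 h2 h3 h12 h13 h23 hG'
end

section
/- Let n ≥ 4 be an integer and consider the polynomial h(x_1, x_2, x_3) = x_1^{n−4} x_2^{n−4} x_3^{n−4} (x_1 + x_2 + x_3)^{n−4} · ∏_{1 ≤ i < j ≤ 3} (x_i − x_j)^2 (x_i + x_j) in three variables over ℝ. Set b = ⌊(4n−7)/3⌋, c = b − 1, and a = 4n − 7 − b − c. Then the coefficient of the monomial x_1^a x_2^b x_3^c in h is nonzero. -/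
/-!
Write `m = n - 4` and `D = ∏_{i<j} (xᵢ - xⱼ)² (xᵢ + xⱼ) = ∑_α d_α x^α`, a form of degree 9 with
30 monomials. Stripping off `(x₁x₂x₃)^m` and expanding `(x₁ + x₂ + x₃)^m` by the multinomial
theorem, the coefficient of `x^{m+ν}` in `h`, for `|ν| = m + 9`, is
`(m! / ν!) · ∑_α d_α ∏ᵢ (νᵢ)_{αᵢ}` with falling factorials `(νᵢ)_{αᵢ}`. For the exponent in
question `ν = (t+4+s, t+3, t+2)`, where `m = 3t + s` and `s < 3`, this sum is a polynomial in `t`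
that factors as `48` times a positive product times an odd integer, so it does not vanish.
-/

open MvPolynomial Finset Nat

namespace MvPolynomial

variable {σ R : Type*} [Fintype σ] [CommSemiring R]

theorem prod_factorial_mul_coeff_sum_X_pow_mul_monomial (m : ℕ) {ν α : σ →₀ ℕ}
    (h : ν.degree = m + α.degree) (c : R) :
    ((∏ i, (ν i)! : ℕ) : R) * coeff ν ((∑ i, X i) ^ m * monomial α c) =
      ((m ! * ∏ i, (ν i).descFactorial (α i) : ℕ) : R) * c := by
  rw [coeff_mul_monomial']
  split_ifs with hαν
  · have hdeg : (ν - α).sum (fun _ k ↦ k) = m := by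
      have := congrArg Finsupp.degree (tsub_add_cancel_of_le hαν)
      rw [map_add] at this
      change (ν - α).degree = m
      omega
    have hfac : ∏ i, (ν i)! = (∏ i, ((ν - α) i)!) * ∏ i, (ν i).descFactorial (α i) := by
      rw [← prod_mul_distrib]
      exact prod_congr rfl fun i _ ↦ (factorial_mul_descFactorial (hαν i)).symm
    have hmult : (∏ i, ((ν - α) i)!) * (ν - α).multinomial = m ! := by
      rw [Finsupp.multinomial_eq_of_support_subset (subset_univ _), multinomial_spec,
        ← Finsupp.degree_eq_sum]
      exact congrArg _ hdeg
    rw [coeff_sum_X_pow_of_fintype, if_pos hdeg, ← mul_assoc, ← Nat.cast_mul, hfac,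
      mul_right_comm, hmult]
  · obtain ⟨i, hi⟩ : ∃ i, ν i < α i := by simpa [Finsupp.le_def] using hαν
    rw [prod_eq_zero (f := fun i ↦ (ν i).descFactorial (α i)) (mem_univ i)
      (descFactorial_eq_zero_iff_lt.mpr hi)]
    simp

theorem monomial_equivFunOnFinite_symm (f : σ → ℕ) (c : R) :
    monomial (Finsupp.equivFunOnFinite.symm f) c = C c * ∏ i, X i ^ f i := by
  rw [monomial_eq, Finsupp.prod_fintype _ _ fun _ ↦ pow_zero _]
  rfl

theorem coeff_prod_X_pow_mul (m : ℕ) (f : σ → ℕ) (P : MvPolynomial σ R) :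
    coeff (Finsupp.equivFunOnFinite.symm fun i ↦ m + f i) ((∏ i, X i) ^ m * P) =
      coeff (Finsupp.equivFunOnFinite.symm f) P := by
  have hX : (∏ i, X i : MvPolynomial σ R) ^ m =
      monomial (Finsupp.equivFunOnFinite.symm fun _ ↦ m) 1 := by
    rw [monomial_equivFunOnFinite_symm, C_1, one_mul, prod_pow]
  have hexp : (Finsupp.equivFunOnFinite.symm fun i ↦ m + f i) =
      Finsupp.equivFunOnFinite.symm (fun _ ↦ m) + Finsupp.equivFunOnFinite.symm f := by
    ext i; rfl
  rw [hX, hexp, coeff_monomial_mul, one_mul]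

end MvPolynomial

open Finsupp (equivFunOnFinite)

/-- The pairs `(α, d_α)` with `D = ∑_α d_α x^α`. -/
def dTerms : List ((Fin 3 → ℕ) × ℤ) :=
  [(![0, 3, 6], 1), (![0, 4, 5], -1), (![0, 5, 4], -1), (![0, 6, 3], 1),
    (![1, 2, 6], -1), (![1, 4, 4], 2), (![1, 6, 2], -1), (![2, 1, 6], -1),
    (![2, 2, 5], 2), (![2, 3, 4], -1), (![2, 4, 3], -1), (![2, 5, 2], 2),
    (![2, 6, 1], -1), (![3, 0, 6], 1), (![3, 2, 4], -1), (![3, 4, 2], -1),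
    (![3, 6, 0], 1), (![4, 0, 5], -1), (![4, 1, 4], 2), (![4, 2, 3], -1),
    (![4, 3, 2], -1), (![4, 4, 1], 2), (![4, 5, 0], -1), (![5, 0, 4], -1),
    (![5, 2, 2], 2), (![5, 4, 0], -1), (![6, 0, 3], 1), (![6, 1, 2], -1),
    (![6, 2, 1], -1), (![6, 3, 0], 1)]

theorem prod_sub_sq_mul_add_eq_sum_dTerms :
    (∏ i : Fin 3, ∏ j ∈ Ioi i, ((X i - X j) ^ 2 * (X i + X j)) : MvPolynomial (Fin 3) ℝ) =
      (dTerms.map fun x ↦ monomial (equivFunOnFinite.symm x.1) (x.2 : ℝ)).sum := by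
  simp [dTerms, monomial_equivFunOnFinite_symm, Fin.prod_univ_three,
    show Ioi (0 : Fin 3) = {1, 2} from rfl, show Ioi (1 : Fin 3) = {2} from rfl,
    show Ioi (2 : Fin 3) = ∅ from rfl]
  ring

def dFallingSum (ν : Fin 3 → ℕ) : ℤ :=
  (dTerms.map fun x ↦ x.2 * ∏ i, ((ν i).descFactorial (x.1 i) : ℤ)).sum

theorem prod_factorial_mul_coeff_sum_X_pow_mul_prod_sub_sq_mul_add (m : ℕ) (ν : Fin 3 →₀ ℕ)
    (hν : ν.degree = m + 9) :
    ((∏ i, (ν i)! : ℕ) : ℝ) * coeff ν ((∑ i, X i) ^ m *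
        ∏ i : Fin 3, ∏ j ∈ Ioi i, ((X i - X j) ^ 2 * (X i + X j))) =
      m ! * (dFallingSum ν : ℝ) := by
  have hdeg : ∀ x ∈ dTerms, (equivFunOnFinite.symm x.1).degree = 9 := by
    simp [dTerms, Finsupp.degree_eq_sum, Fin.sum_univ_three]
  rw [prod_sub_sq_mul_add_eq_sum_dTerms, ← List.sum_map_mul_left, ← lcoeff_apply,
    map_list_sum, ← List.sum_map_mul_left, dFallingSum, Int.cast_list_sum,
    ← List.sum_map_mul_left]
  simp only [List.map_map]
  refine congrArg List.sum (List.map_congr_left fun x hx ↦ ?_)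
  simp only [Function.comp_apply, lcoeff_apply]
  rw [prod_factorial_mul_coeff_sum_X_pow_mul_monomial m (by rw [hν, hdeg x hx])]
  simp only [Finsupp.coe_equivFunOnFinite_symm]
  push_cast
  ring

theorem dFallingSum_ne_zero (t s : ℕ) (hs : s < 3) :
    dFallingSum ![t + 4 + s, t + 3, t + 2] ≠ 0 := by
  have hcast (a k : ℕ) : (a.descFactorial k : ℤ) = (descPochhammer ℤ k).eval (a : ℤ) :=
    (descPochhammer_eval_eq_descFactorial ℤ a k).symm
  interval_cases s
  · rw [show dFallingSum ![t + 4 + 0, t + 3, t + 2] =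
        48 * ((t + 1) * (t + 2) * (t + 3)) * (2 * (-t ^ 3 - 2 * t ^ 2 + t - 1) + 1) by
      simp [dFallingSum, dTerms, Fin.prod_univ_three, hcast, descPochhammer_succ_eval]
      ring]
    exact mul_ne_zero (by positivity) (by omega)
  · rw [show dFallingSum ![t + 4 + 1, t + 3, t + 2] =
        48 * ((t + 1) * (t + 2) * (t + 3)) * (2 * (-t ^ 3 + 6 * t + 2) + 1) by
      simp [dFallingSum, dTerms, Fin.prod_univ_three, hcast, descPochhammer_succ_eval]
      ring]
    exact mul_ne_zero (by positivity) (by omega)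
  · rw [show dFallingSum ![t + 4 + 2, t + 3, t + 2] =
        48 * ((t + 1) * (t + 2)) * (2 * (-t ^ 4 + t ^ 3 + 27 * t ^ 2 + 45 * t + 22) + 1) by
      simp [dFallingSum, dTerms, Fin.prod_univ_three, hcast, descPochhammer_succ_eval]
      ring]
    exact mul_ne_zero (by positivity) (by omega)

/-- For `n ≥ 4`, in the polynomial
`h = x₁^{n-4} x₂^{n-4} x₃^{n-4} (x₁+x₂+x₃)^{n-4} · ∏_{1≤i<j≤3} (xᵢ-xⱼ)²(xᵢ+xⱼ)`
over `ℝ`, the coefficient of `x₁^a x₂^b x₃^c` is nonzero, where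
`b = ⌊(4n-7)/3⌋`, `c = b - 1`, and `a = 4n - 7 - b - c`. -/
theorem statement_9 (n : ℕ) (hn : 4 ≤ n) :
    MvPolynomial.coeff
        (Finsupp.equivFunOnFinite.symm
          ![4 * n - 7 - (4 * n - 7) / 3 - ((4 * n - 7) / 3 - 1),
            (4 * n - 7) / 3, (4 * n - 7) / 3 - 1])
        ((X 0) ^ (n - 4) * (X 1) ^ (n - 4) * (X 2) ^ (n - 4) *
            (X 0 + X 1 + X 2) ^ (n - 4) *
            ∏ i : Fin 3, ∏ j ∈ Finset.Ioi i, ((X i - X j) ^ 2 * (X i + X j)) :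
          MvPolynomial (Fin 3) ℝ) ≠ 0 := by
  obtain ⟨t, s, hs, hm⟩ : ∃ t s, s < 3 ∧ n - 4 = 3 * t + s :=
    ⟨(n - 4) / 3, (n - 4) % 3, Nat.mod_lt _ (by norm_num), (Nat.div_add_mod _ _).symm⟩
  set m := n - 4
  set ν : Fin 3 → ℕ := ![t + 4 + s, t + 3, t + 2]
  have hexp : ![4 * n - 7 - (4 * n - 7) / 3 - ((4 * n - 7) / 3 - 1),
      (4 * n - 7) / 3, (4 * n - 7) / 3 - 1] = fun i ↦ m + ν i := by
    funext i; fin_cases i <;> simp [ν] <;> omega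
  have hdeg : (equivFunOnFinite.symm ν).degree = m + 9 := by
    simp [Finsupp.degree_eq_sum, Fin.sum_univ_three, ν]; omega
  have hprod : (X 0 ^ m * X 1 ^ m * X 2 ^ m : MvPolynomial (Fin 3) ℝ) = (∏ i, X i) ^ m := by
    simp [Fin.prod_univ_three, mul_pow]
  rw [hexp, mul_assoc, hprod, ← Fin.sum_univ_three X, coeff_prod_X_pow_mul]
  intro h0
  have hcoeff := prod_factorial_mul_coeff_sum_X_pow_mul_prod_sub_sq_mul_add m _ hdeg
  rw [h0, mul_zero] at hcoeff
  have hS := (mul_eq_zero.mp hcoeff.symm).resolve_left (by positivity)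
  exact dFallingSum_ne_zero t s hs (Int.cast_eq_zero.mp hS)
end

section
/- For all integers N ≥ 1 and t ≥ 0, the coefficient of the monomial ∏_{1 ≤ i ≤ N} x_i^{2(N−1)+i−1+t} in the polynomial ∏_{1 ≤ i < j ≤ N} (x_i − x_j)^5 · ∏_{1 ≤ i ≤ N} x_i^t has absolute value (3N)! / (N! · 6^N); in particular, this coefficient is nonzero. -/
/-!
Let `V = ∏_{i<j} (x_j - x_i)` be the Vandermonde determinant; the polynomial of the statement is
`±V^5 · (x_1 ⋯ x_N)^t`, and the factor `(x_1 ⋯ x_N)^t` only shifts exponents. Expand one factor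
of `V^6 = V^5 · V` as the determinant sum over permutations: since `V^5` is alternating, all `N!`
terms contribute the same coefficient at the symmetric monomial `(x_1 ⋯ x_N)^{3(N-1)}`, which is
therefore `±N!` times the coefficient sought. On the other hand `V^6 = ±∏_{i ≠ j} (x_j - x_i)^3`,
and the coefficient of `(x_1 ⋯ x_N)^{3(N-1)}` there is Dyson's constant term `(3N)! / 3!^N`.
Dyson's identity is proved as by Good: Lagrange interpolation of the constant `1` at the nodes
`x_i` gives a Pascal-type recursion, which the multinomial coefficients satisfy as well.
-/

open MvPolynomial Finset

theorem Nat.multinomial_eq_sum_update {α : Type*} [DecidableEq α] {s : Finset α}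
    (hs : s.Nonempty) {f : α → ℕ} (hf : ∀ i ∈ s, f i ≠ 0) :
    Nat.multinomial s f = ∑ m ∈ s, Nat.multinomial s (Function.update f m (f m - 1)) := by
  have hsum : ∀ m ∈ s, ∑ i ∈ s, Function.update f m (f m - 1) i = (∑ i ∈ s, f i) - 1 := by
    intro m hm
    rw [sum_update_of_mem hm, sdiff_singleton_eq_erase, ← add_sum_erase s f hm]
    have := hf m hm
    omega
  have hprod : ∀ m ∈ s, f m * ∏ i ∈ s, (Function.update f m (f m - 1) i).factorial =
      ∏ i ∈ s, (f i).factorial := by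
    intro m hm
    rw [← mul_prod_erase s _ hm, ← mul_prod_erase s (fun i => (f i).factorial) hm,
      Function.update_self, ← mul_assoc, Nat.mul_factorial_pred (hf m hm)]
    congr 1
    exact prod_congr rfl fun i hi => by rw [Function.update_of_ne (ne_of_mem_erase hi)]
  have hpos : 0 < ∑ i ∈ s, f i := by
    obtain ⟨i, hi⟩ := hs
    exact lt_of_lt_of_le (Nat.pos_of_ne_zero (hf i hi)) (single_le_sum (by simp) hi)
  apply Nat.eq_of_mul_eq_mul_left (prod_pos fun i _ => Nat.factorial_pos (f i))
  rw [Nat.multinomial_spec, mul_sum, ← Nat.mul_factorial_pred hpos.ne', sum_mul]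
  refine sum_congr rfl fun m hm => ?_
  rw [← hprod m hm, mul_comm (f m), mul_assoc, Nat.multinomial_spec, hsum m hm, mul_comm]

theorem Nat.factorial_pow_mul_multinomial_const (ι : Type*) [Fintype ι] (a : ℕ) :
    a.factorial ^ Fintype.card ι * Nat.multinomial univ (fun _ : ι => a) =
      (Fintype.card ι * a).factorial := by
  simpa using Nat.multinomial_spec univ fun _ : ι => a

/-- Clearing denominators in `∑ m, ∏_{j ≠ m} v j / (v j - v m) = 1`, which is the Lagrange
interpolation of the constant `1` evaluated at `0`. -/
theorem prod_prod_erase_sub_eq_sum {F ι : Type*} [Field F] [DecidableEq ι] {s : Finset ι}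
    (hs : s.Nonempty) {v : ι → F} (hv : Set.InjOn v s) :
    ∏ i ∈ s, ∏ j ∈ s.erase i, (v j - v i) =
      ∑ m ∈ s, (∏ j ∈ s.erase m, v j) * ∏ i ∈ s.erase m, ∏ j ∈ s.erase i, (v j - v i) := by
  have basis_eval_zero : ∀ m ∈ s, (Lagrange.basis s v m).eval 0 * ∏ j ∈ s.erase m, (v j - v m) =
      ∏ j ∈ s.erase m, v j := by
    intro m hm
    rw [Lagrange.basis, Polynomial.eval_prod, ← prod_mul_distrib]
    refine prod_congr rfl fun j hj => ?_
    have hne : v m - v j ≠ 0 :=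
      sub_ne_zero.mpr fun h => (mem_erase.mp hj).1 (hv (mem_of_mem_erase hj) hm h.symm)
    simp only [Lagrange.basisDivisor, Polynomial.eval_mul, Polynomial.eval_C,
      Polynomial.eval_sub, Polynomial.eval_X]
    field_simp
    ring
  calc ∏ i ∈ s, ∏ j ∈ s.erase i, (v j - v i)
      = (∑ m ∈ s, (Lagrange.basis s v m).eval 0) * ∏ i ∈ s, ∏ j ∈ s.erase i, (v j - v i) := by
        rw [← Polynomial.eval_finsetSum, Lagrange.sum_basis hv hs, Polynomial.eval_one, one_mul]
    _ = _ := by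
        rw [sum_mul]
        refine sum_congr rfl fun m hm => ?_
        rw [← mul_prod_erase s _ hm, ← mul_assoc, basis_eval_zero m hm]

theorem prod_prod_erase_eq_prod_prod_Ioi {ι M : Type*} [LinearOrder ι] [Fintype ι]
    [LocallyFiniteOrderTop ι] [LocallyFiniteOrderBot ι] [CommMonoid M] (f : ι → ι → M) :
    ∏ i, ∏ j ∈ univ.erase i, f i j = ∏ i, ∏ j ∈ Ioi i, (f i j * f j i) := by
  simp_rw [← compl_singleton, ← Ioi_disjUnion_Iio, prod_disjUnion, prod_mul_distrib]
  congr 1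
  exact prod_comm' (by simp)

theorem prod_prod_Ioi_sub_eq_neg_one_pow_mul {ι R : Type*} [LinearOrder ι] [Fintype ι]
    [LocallyFiniteOrderTop ι] [CommRing R] (v : ι → R) :
    ∏ i, ∏ j ∈ Ioi i, (v i - v j) = (-1) ^ (∑ i : ι, #(Ioi i)) * ∏ i, ∏ j ∈ Ioi i, (v j - v i) := by
  rw [← prod_pow_eq_pow_sum, ← prod_mul_distrib]
  refine prod_congr rfl fun i _ => ?_
  rw [← prod_neg]
  simp_rw [neg_sub]

section Coefficients

variable {R σ : Type*} [CommRing R]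

theorem abs_coeff_neg_one_pow_mul [LinearOrder R] [IsOrderedRing R]
    (d : σ →₀ ℕ) (k : ℕ) (p : MvPolynomial σ R) :
    |coeff d ((-1) ^ k * p)| = |coeff d p| := by
  rcases neg_one_pow_eq_or (MvPolynomial σ R) k with h | h <;> simp [h]

theorem isHomogeneous_prod_sub_pow (t : Finset σ) (m : σ) (a : σ → ℕ) :
    (∏ i ∈ t, (X m - X i : MvPolynomial σ R) ^ a i).IsHomogeneous (∑ i ∈ t, a i) := by
  simpa using IsHomogeneous.prod t _ (fun i => 1 * a i)
    fun i _ => ((isHomogeneous_X R m).sub (isHomogeneous_X R i)).pow (a i)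

variable [DecidableEq σ]

theorem coeff_single_prod_sub_pow {t : Finset σ} {m : σ} (hm : m ∉ t) (a : σ → ℕ) :
    coeff (Finsupp.single m (∑ i ∈ t, a i)) (∏ i ∈ t, (X m - X i : MvPolynomial σ R) ^ a i) =
      1 := by
  set I : Ideal (MvPolynomial σ R) := Ideal.span (X '' (t : Set σ))
  have hmod : ∏ i ∈ t, (X m - X i : MvPolynomial σ R) ^ a i - X m ^ (∑ i ∈ t, a i) ∈ I := by
    rw [← Ideal.Quotient.eq, map_prod, ← prod_pow_eq_pow_sum, map_prod]
    refine prod_congr rfl fun i hi => ?_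
    rw [map_pow, map_pow, map_sub, Ideal.Quotient.eq_zero_iff_mem.mpr
      (Ideal.subset_span (Set.mem_image_of_mem X (mem_coe.mpr hi))), sub_zero]
  have hcoeff : coeff (Finsupp.single m (∑ i ∈ t, a i))
      (∏ i ∈ t, (X m - X i : MvPolynomial σ R) ^ a i - X m ^ (∑ i ∈ t, a i)) = 0 := by
    by_contra h
    obtain ⟨i, hi, hne⟩ := mem_ideal_span_X_image.mp hmod _ (MvPolynomial.mem_support_iff.mpr h)
    exact hne (by rw [Finsupp.single_apply, if_neg (by rintro rfl; exact hm hi)])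
  rwa [coeff_sub, coeff_X_pow, if_pos rfl, sub_eq_zero] at hcoeff

theorem coeff_single_add_mul_of_isHomogeneous {A : ℕ} {m : σ} {w : σ →₀ ℕ}
    {B G : MvPolynomial σ R} (hB : B.IsHomogeneous A) (hG : m ∉ G.vars) (hw : w m = 0) :
    coeff (Finsupp.single m A + w) (B * G) = coeff (Finsupp.single m A) B * coeff w G := by
  rw [coeff_mul, sum_eq_single_of_mem (Finsupp.single m A, w) (mem_antidiagonal.mpr rfl)]
  rintro ⟨d, e⟩ hde hne
  by_contra hprod
  have hem : e m = 0 := by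
    by_contra h
    exact hG ((mem_vars_iff_mem_support m).mpr ⟨e,
      MvPolynomial.mem_support_iff.mpr (right_ne_zero_of_mul hprod), Finsupp.mem_support_iff.mpr h⟩)
  have hsum := mem_antidiagonal.mp hde
  have hdm : d m = A := by simpa [hem, hw] using DFunLike.congr_fun hsum m
  have hdeg : d.degree = A := by_contra fun h => left_ne_zero_of_mul hprod (hB.coeff_eq_zero h)
  have hd : d = Finsupp.single m A := by
    have hsplit := Finsupp.single_add_erase m d
    have herase : (Finsupp.erase m d).degree = 0 := by
      have := congrArg Finsupp.degree hsplit
      rw [map_add, Finsupp.degree_single, hdm, hdeg] at this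
      omega
    rw [(Finsupp.degree_eq_zero_iff _).mp herase, add_zero, hdm] at hsplit
    exact hsplit.symm
  subst hd
  exact hne (Prod.ext rfl (add_left_cancel hsum))

theorem coeff_mul_prod_X_pow [Fintype σ] (f : σ → ℕ) (t : ℕ) (p : MvPolynomial σ R) :
    coeff (Finsupp.equivFunOnFinite.symm fun i => f i + t) (p * ∏ i, X i ^ t) =
      coeff (Finsupp.equivFunOnFinite.symm f) p := by
  have hsplit : (Finsupp.equivFunOnFinite.symm fun i => f i + t) =
      Finsupp.equivFunOnFinite.symm f + ∑ i, Finsupp.single i t := by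
    ext k
    simp [Finsupp.single_apply]
  simp only [X_pow_eq_monomial, ← monomial_sum_one, hsplit, coeff_mul_monomial, mul_one]

end Coefficients

section Dyson

variable {R σ : Type*} [CommRing R] [DecidableEq σ]

noncomputable def dysonFactor (s : Finset σ) (i : σ) : MvPolynomial σ R :=
  ∏ j ∈ s.erase i, (X j - X i)

/-- Dyson's constant term `CT ∏_{i ≠ j} (1 - x_i / x_j)^(a i)` is, after clearing denominators,
the coefficient of `x ^ dysonExponent s a` in `dysonProduct s a`. -/
noncomputable def dysonProduct (s : Finset σ) (a : σ → ℕ) : MvPolynomial σ R :=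
  ∏ i ∈ s, dysonFactor s i ^ a i

noncomputable def dysonExponent (s : Finset σ) (a : σ → ℕ) : σ →₀ ℕ :=
  ∑ j ∈ s, Finsupp.single j ((∑ i ∈ s, a i) - a j)

theorem dysonExponent_apply (s : Finset σ) (a : σ → ℕ) (k : σ) :
    dysonExponent s a k = if k ∈ s then (∑ i ∈ s, a i) - a k else 0 := by
  simp only [dysonExponent, Finsupp.finsetSum_apply, Finsupp.single_apply]
  exact sum_ite_eq' s k _

theorem prod_dysonFactor_eq_sum [IsDomain R] {s : Finset σ} (hs : s.Nonempty) :
    ∏ i ∈ s, (dysonFactor s i : MvPolynomial σ R) =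
      ∑ m ∈ s, (∏ j ∈ s.erase m, X j) * ∏ i ∈ s.erase m, dysonFactor s i := by
  let K := FractionRing (MvPolynomial σ R)
  have hinj : Function.Injective (algebraMap (MvPolynomial σ R) K) :=
    IsFractionRing.injective _ _
  apply hinj
  simpa [dysonFactor] using prod_prod_erase_sub_eq_sum hs
    (v := fun i => algebraMap (MvPolynomial σ R) K (X i))
    fun i _ j _ h => X_injective (hinj h)

theorem dysonProduct_eq_sum_update [IsDomain R] {s : Finset σ} (hs : s.Nonempty) {a : σ → ℕ}
    (ha : ∀ i ∈ s, a i ≠ 0) :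
    (dysonProduct s a : MvPolynomial σ R) =
      ∑ m ∈ s, (∏ j ∈ s.erase m, X j) * dysonProduct s (Function.update a m (a m - 1)) := by
  have pow_pred_mul : ∀ i ∈ s, (dysonFactor s i : MvPolynomial σ R) ^ (a i - 1) *
      dysonFactor s i = dysonFactor s i ^ a i := fun i hi => by
    rw [← pow_succ, Nat.sub_add_cancel (Nat.one_le_iff_ne_zero.mpr (ha i hi))]
  have update_eq : ∀ m ∈ s, (dysonProduct s (Function.update a m (a m - 1)) : MvPolynomial σ R) =
      (∏ i ∈ s, dysonFactor s i ^ (a i - 1)) * ∏ i ∈ s.erase m, dysonFactor s i := by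
    intro m hm
    rw [dysonProduct, ← mul_prod_erase s _ hm, ← mul_prod_erase s _ hm, Function.update_self,
      mul_assoc, ← prod_mul_distrib]
    congr 1
    refine prod_congr rfl fun i hi => ?_
    rw [Function.update_of_ne (ne_of_mem_erase hi), pow_pred_mul i (mem_of_mem_erase hi)]
  calc (dysonProduct s a : MvPolynomial σ R)
      = (∏ i ∈ s, dysonFactor s i ^ (a i - 1)) * ∏ i ∈ s, dysonFactor s i := by
        rw [dysonProduct, ← prod_mul_distrib]
        exact prod_congr rfl fun i hi => (pow_pred_mul i hi).symm
    _ = _ := by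
        rw [prod_dysonFactor_eq_sum hs, mul_sum]
        refine sum_congr rfl fun m hm => ?_
        rw [update_eq m hm]
        ring

theorem dysonExponent_eq_add_of_ne_zero {s : Finset σ} {a : σ → ℕ} {m : σ} (hm : m ∈ s)
    (ha : a m ≠ 0) :
    dysonExponent s a =
      (∑ j ∈ s.erase m, Finsupp.single j 1) + dysonExponent s (Function.update a m (a m - 1)) := by
  have hsum : ∑ i ∈ s, Function.update a m (a m - 1) i = (∑ i ∈ s, a i) - 1 := by
    rw [sum_update_of_mem hm, sdiff_singleton_eq_erase, ← add_sum_erase s a hm]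
    omega
  ext k
  simp only [Finsupp.add_apply, Finsupp.finsetSum_apply, Finsupp.single_apply,
    sum_ite_eq', dysonExponent_apply, hsum]
  by_cases hk : k ∈ s
  · have := single_le_sum (fun i _ => Nat.zero_le (a i)) hk
    rcases eq_or_ne k m with rfl | hkm
    · simp only [hk, ↓reduceIte, mem_erase, ne_eq, not_true_eq_false, and_true,
        Function.update_self, zero_add]
      omega
    · have := add_le_sum (fun i _ => Nat.zero_le (a i)) hk hm hkm
      simp only [hk, ↓reduceIte, mem_erase, ne_eq, hkm, not_false_eq_true, and_self,
        Function.update_of_ne]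
      omega
  · simp [hk]

theorem dysonProduct_eq_mul_of_eq_zero {s : Finset σ} {a : σ → ℕ} {m : σ} (hm : m ∈ s)
    (ha : a m = 0) :
    (dysonProduct s a : MvPolynomial σ R) =
      (∏ i ∈ s.erase m, (X m - X i) ^ a i) * dysonProduct (s.erase m) a := by
  rw [dysonProduct, ← mul_prod_erase s _ hm, ha, pow_zero, one_mul, dysonProduct,
    ← prod_mul_distrib]
  refine prod_congr rfl fun i hi => ?_
  have hm' : m ∈ s.erase i := mem_erase.mpr ⟨(ne_of_mem_erase hi).symm, hm⟩
  rw [dysonFactor, ← mul_prod_erase _ _ hm', erase_right_comm, mul_pow, dysonFactor]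

theorem dysonExponent_eq_add_of_eq_zero {s : Finset σ} {a : σ → ℕ} {m : σ} (hm : m ∈ s)
    (ha : a m = 0) :
    dysonExponent s a = Finsupp.single m (∑ i ∈ s.erase m, a i) + dysonExponent (s.erase m) a := by
  ext k
  rw [Finsupp.add_apply, dysonExponent_apply, dysonExponent_apply, Finsupp.single_apply,
    sum_erase s ha]
  rcases eq_or_ne m k with rfl | hmk
  · simp [hm, ha]
  · simp [hmk, hmk.symm]

theorem dysonProduct_mem_supported (s : Finset σ) (a : σ → ℕ) :
    (dysonProduct s a : MvPolynomial σ R) ∈ supported R (s : Set σ) := by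
  have hX : ∀ i ∈ s, (X i : MvPolynomial σ R) ∈ supported R (s : Set σ) :=
    fun i hi => Algebra.subset_adjoin ⟨i, hi, rfl⟩
  refine Subalgebra.prod_mem _ fun i hi => Subalgebra.pow_mem _ ?_ _
  exact Subalgebra.prod_mem _ fun j hj =>
    Subalgebra.sub_mem _ (hX j (mem_of_mem_erase hj)) (hX i hi)

theorem coeff_dysonProduct [IsDomain R] (s : Finset σ) (a : σ → ℕ) :
    coeff (dysonExponent s a) (dysonProduct s a : MvPolynomial σ R) = Nat.multinomial s a := by
  induction hK : ∑ i ∈ s, a i + s.card using Nat.strong_induction_on generalizing s a with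
  | _ K ih =>
  by_cases hzero : ∃ m ∈ s, a m = 0
  · -- `x_m` occurs only in the factors `(x_m - x_i) ^ a i`, whose `x_m`-leading term is `x_m ^ ∑ a`
    obtain ⟨m, hm, ha⟩ := hzero
    have hvars : m ∉ (dysonProduct (s.erase m) a : MvPolynomial σ R).vars := fun h =>
      notMem_erase m s (mem_supported.mp (dysonProduct_mem_supported _ _) h)
    have hlt : ∑ i ∈ s.erase m, a i + (s.erase m).card < K := by
      rw [← hK, sum_erase s ha, card_erase_of_mem hm]
      have := card_pos.mpr ⟨m, hm⟩
      omega
    rw [dysonProduct_eq_mul_of_eq_zero hm ha, dysonExponent_eq_add_of_eq_zero hm ha,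
      coeff_single_add_mul_of_isHomogeneous (isHomogeneous_prod_sub_pow _ _ _) hvars
        (by simp [dysonExponent_apply]),
      coeff_single_prod_sub_pow (notMem_erase m s), one_mul, ih _ hlt _ _ rfl,
      Nat.multinomial_congr_of_sdiff (erase_subset m s) (by simp [sdiff_erase_self hm, ha])
        (fun _ _ => rfl)]
  · push Not at hzero
    rcases s.eq_empty_or_nonempty with rfl | hs
    · simp [dysonProduct, dysonExponent]
    rw [dysonProduct_eq_sum_update hs hzero, coeff_sum, Nat.multinomial_eq_sum_update hs hzero,
      Nat.cast_sum]
    refine sum_congr rfl fun m hm => ?_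
    have hlt : ∑ i ∈ s, Function.update a m (a m - 1) i + s.card < K := by
      rw [← hK, sum_update_of_mem hm, sdiff_singleton_eq_erase, ← add_sum_erase s a hm]
      have := hzero m hm
      omega
    have hX : ∏ j ∈ s.erase m, (X j : MvPolynomial σ R) =
        monomial (∑ j ∈ s.erase m, Finsupp.single j 1) 1 := (monomial_sum_one _ _).symm
    rw [dysonExponent_eq_add_of_ne_zero hm (hzero m hm), hX, coeff_monomial_mul,
      one_mul, ih _ hlt _ _ rfl]

end Dyson

section Alternating

variable {R σ : Type*} [CommRing R] [Fintype σ] [DecidableEq σ]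

def MvPolynomial.IsAlternating (P : MvPolynomial σ R) : Prop :=
  ∀ g : Equiv.Perm σ, rename g P = Equiv.Perm.sign g • P

theorem MvPolynomial.IsAlternating.pow {P : MvPolynomial σ R} (hP : IsAlternating P) {k : ℕ}
    (hk : Odd k) : IsAlternating (P ^ k) := by
  intro g
  rw [map_pow, hP g, smul_pow]
  rcases Int.units_eq_one_or (Equiv.Perm.sign g) with h | h <;> simp [h, hk.neg_one_pow]

theorem MvPolynomial.IsAlternating.coeff_mapDomain {P : MvPolynomial σ R} (hP : IsAlternating P)
    (g : Equiv.Perm σ) (d : σ →₀ ℕ) :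
    coeff (d.mapDomain g) P = Equiv.Perm.sign g • coeff d P := by
  have h := coeff_rename_mapDomain g g.injective P d
  rw [hP g, coeff_smul] at h
  rw [← h, smul_smul, Int.units_mul_self, one_smul]

theorem MvPolynomial.IsAlternating.rename_mul {P : MvPolynomial σ R} (hP : IsAlternating P)
    (g : Equiv.Perm σ) (Q : MvPolynomial σ R) :
    rename g (P * Q) = Equiv.Perm.sign g • (P * rename g Q) := by
  rw [map_mul, hP g, smul_mul_assoc]

end Alternating

section Vandermonde

variable {R : Type*} [CommRing R] {n : ℕ}

theorem isAlternating_det_vandermonde (n : ℕ) :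
    IsAlternating (Matrix.vandermonde fun i : Fin n => (X i : MvPolynomial (Fin n) R)).det := by
  intro g
  have h := (rename g : MvPolynomial (Fin n) R →ₐ[R] _).toRingHom.map_det
    (Matrix.vandermonde fun i : Fin n => (X i : MvPolynomial (Fin n) R))
  have hmap : (Matrix.vandermonde fun i : Fin n => (X i : MvPolynomial (Fin n) R)).map
      (rename g : MvPolynomial (Fin n) R →ₐ[R] _).toRingHom =
      (Matrix.vandermonde fun i : Fin n => (X i : MvPolynomial (Fin n) R)).submatrix g id := by
    ext i j
    simp [Matrix.vandermonde_apply]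
  rw [RingHom.mapMatrix_apply, hmap, Matrix.det_permute] at h
  rw [Units.smul_def, zsmul_eq_mul]
  exact h

theorem MvPolynomial.IsAlternating.coeff_mul_det_vandermonde {P : MvPolynomial (Fin n) R}
    (hP : IsAlternating P) (K : ℕ) :
    coeff (Finsupp.equivFunOnFinite.symm fun _ => K + (n - 1))
        (P * (Matrix.vandermonde fun i : Fin n => (X i : MvPolynomial (Fin n) R)).det) =
      n.factorial * coeff (Finsupp.equivFunOnFinite.symm fun i : Fin n => K + (n - 1 - i)) P := by
  set M : MvPolynomial (Fin n) R := ∏ i : Fin n, X i ^ (i : ℕ)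
  set u : Fin n →₀ ℕ := Finsupp.equivFunOnFinite.symm fun _ => K + (n - 1)
  have hdet : (Matrix.vandermonde fun i : Fin n => (X i : MvPolynomial (Fin n) R)).det =
      ∑ g : Equiv.Perm (Fin n), Equiv.Perm.sign g • rename g M := by
    simp [Matrix.det_apply, Matrix.vandermonde_apply, M, map_prod]
  have hterm : ∀ g : Equiv.Perm (Fin n),
      coeff u (P * (Equiv.Perm.sign g • rename g M)) = coeff u (P * M) := by
    intro g
    have hu : u.mapDomain g = u := by
      ext k
      simp [u, Finsupp.mapDomain_equiv_apply]
    rw [mul_smul_comm, ← hP.rename_mul, ← hu, coeff_rename_mapDomain g g.injective, hu]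
  have hM : M = monomial (∑ i : Fin n, Finsupp.single i (i : ℕ)) 1 := by
    simp only [M, X_pow_eq_monomial, monomial_sum_one]
  have hsplit : u = (Finsupp.equivFunOnFinite.symm fun i : Fin n => K + (n - 1 - i)) +
      ∑ i : Fin n, Finsupp.single i (i : ℕ) := by
    ext k
    simp only [u, Finsupp.coe_equivFunOnFinite_symm, Finsupp.coe_add, Finsupp.coe_finsetSum,
      Pi.add_apply, Finset.sum_apply, Finsupp.single_apply, sum_ite_eq', mem_univ, ↓reduceIte]
    omega
  rw [hdet, mul_sum, coeff_sum, sum_congr rfl fun g _ => hterm g, sum_const, card_univ,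
    Fintype.card_perm, Fintype.card_fin, nsmul_eq_mul, hM, hsplit, coeff_mul_monomial, mul_one]

theorem prod_prod_Ioi_X_sub_X_eq_neg_one_pow_mul_det (n : ℕ) :
    ∏ i : Fin n, ∏ j ∈ Ioi i, (X i - X j : MvPolynomial (Fin n) R) =
      (-1) ^ (∑ i : Fin n, #(Ioi i)) * (Matrix.vandermonde fun i : Fin n => X i).det := by
  rw [Matrix.det_vandermonde]
  exact prod_prod_Ioi_sub_eq_neg_one_pow_mul _

theorem dysonProduct_univ_const (n a : ℕ) :
    (dysonProduct univ fun _ => a : MvPolynomial (Fin n) R) =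
      (-1) ^ ((∑ i : Fin n, #(Ioi i)) * a) *
        (Matrix.vandermonde fun i : Fin n => (X i : MvPolynomial (Fin n) R)).det ^ (2 * a) := by
  have h : ∏ i : Fin n, (dysonFactor univ i : MvPolynomial (Fin n) R) =
      (-1) ^ (∑ i : Fin n, #(Ioi i)) *
        (Matrix.vandermonde fun i : Fin n => (X i : MvPolynomial (Fin n) R)).det ^ 2 := by
    simp only [dysonFactor]
    rw [prod_prod_erase_eq_prod_prod_Ioi, prod_congr rfl fun i _ => prod_mul_distrib,
      prod_mul_distrib, prod_prod_Ioi_X_sub_X_eq_neg_one_pow_mul_det, ← Matrix.det_vandermonde]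
    ring
  rw [dysonProduct, prod_pow, h]
  ring

end Vandermonde

theorem factorial_mul_abs_coeff_prod_Ioi_sub_pow {R : Type*} [CommRing R] [LinearOrder R]
    [IsStrictOrderedRing R] (N r : ℕ) :
    (N.factorial : R) * |coeff (Finsupp.equivFunOnFinite.symm fun i : Fin N => r * (N - 1) + i)
        (∏ i : Fin N, ∏ j ∈ Ioi i, (X i - X j : MvPolynomial (Fin N) R) ^ (2 * r + 1))| =
      Nat.multinomial univ fun _ : Fin N => r + 1 := by
  have hW := (isAlternating_det_vandermonde (R := R) N).pow (odd_two_mul_add_one r)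
  have hdyson := dysonProduct_univ_const (R := R) N (r + 1)
  set W := (Matrix.vandermonde fun i : Fin N => (X i : MvPolynomial (Fin N) R)).det
  set ν : Fin N →₀ ℕ := Finsupp.equivFunOnFinite.symm fun i : Fin N => r * (N - 1) + (N - 1 - i)
  have hD : ∏ i : Fin N, ∏ j ∈ Ioi i, (X i - X j : MvPolynomial (Fin N) R) ^ (2 * r + 1) =
      (-1) ^ ((∑ i : Fin N, #(Ioi i)) * (2 * r + 1)) * W ^ (2 * r + 1) := by
    rw [prod_congr rfl fun i _ => prod_pow _ _ _, prod_pow,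
      prod_prod_Ioi_X_sub_X_eq_neg_one_pow_mul_det, mul_pow, ← pow_mul]
  have hrev : (Finsupp.equivFunOnFinite.symm fun i : Fin N => r * (N - 1) + i) =
      ν.mapDomain Fin.revPerm := by
    ext k
    simp only [ν, Finsupp.equivFunOnFinite_symm_apply_apply, Finsupp.mapDomain_equiv_apply,
      Fin.revPerm_symm, Fin.revPerm_apply, Fin.val_rev, Nat.add_left_cancel_iff]
    omega
  have hexp : dysonExponent univ (fun _ : Fin N => r + 1) =
      Finsupp.equivFunOnFinite.symm fun _ => r * (N - 1) + (N - 1) := by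
    ext k
    simp only [dysonExponent_apply, mem_univ, if_true, sum_const, card_univ, Fintype.card_fin,
      smul_eq_mul, Finsupp.coe_equivFunOnFinite_symm, ← Nat.sub_one_mul]
    ring
  calc (N.factorial : R) * |coeff _ _|
      = N.factorial * |coeff ν (W ^ (2 * r + 1))| := by
        rw [hD, abs_coeff_neg_one_pow_mul, hrev, hW.coeff_mapDomain]
        rcases Int.units_eq_one_or (Equiv.Perm.sign (Fin.revPerm : Equiv.Perm (Fin N)))
          with h | h <;> simp [h]
    _ = |coeff (Finsupp.equivFunOnFinite.symm fun _ => r * (N - 1) + (N - 1))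
          (W ^ (2 * r + 1) * W)| := by
        rw [hW.coeff_mul_det_vandermonde, abs_mul, Nat.abs_cast]
    _ = |coeff (dysonExponent univ fun _ => r + 1) (dysonProduct univ fun _ => r + 1)| := by
        rw [hexp, hdyson, abs_coeff_neg_one_pow_mul, ← pow_succ, mul_add_one]
    _ = _ := by rw [coeff_dysonProduct, Nat.abs_cast]

theorem statement_11_general (N t : ℕ) :
    |MvPolynomial.coeff
        (Finsupp.equivFunOnFinite.symm fun i : Fin N => 2 * (N - 1) + i.1 + t)
        ((∏ i : Fin N, ∏ j ∈ Finset.Ioi i, (X i - X j) ^ 5) *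
          ∏ i : Fin N, (X i) ^ t : MvPolynomial (Fin N) ℝ)| =
      ((3 * N).factorial : ℝ) / ((N.factorial : ℝ) * (6 : ℝ) ^ N) ∧
    MvPolynomial.coeff
        (Finsupp.equivFunOnFinite.symm fun i : Fin N => 2 * (N - 1) + i.1 + t)
        ((∏ i : Fin N, ∏ j ∈ Finset.Ioi i, (X i - X j) ^ 5) *
          ∏ i : Fin N, (X i) ^ t : MvPolynomial (Fin N) ℝ) ≠ 0 := by
  have habs : |coeff (Finsupp.equivFunOnFinite.symm fun i : Fin N => 2 * (N - 1) + i.1 + t)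
      ((∏ i : Fin N, ∏ j ∈ Ioi i, (X i - X j) ^ 5) * ∏ i : Fin N, (X i) ^ t :
        MvPolynomial (Fin N) ℝ)| =
      ((3 * N).factorial : ℝ) / ((N.factorial : ℝ) * 6 ^ N) := by
    rw [coeff_mul_prod_X_pow (fun i : Fin N => 2 * (N - 1) + i.1), eq_div_iff (by positivity)]
    have hvalue := factorial_mul_abs_coeff_prod_Ioi_sub_pow (R := ℝ) N 2
    have hmultinomial := congrArg (Nat.cast : ℕ → ℝ)
      (Nat.factorial_pow_mul_multinomial_const (Fin N) (2 + 1))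
    rw [Fintype.card_fin, mul_comm N] at hmultinomial
    push_cast at hmultinomial
    linear_combination 6 ^ N * hvalue + hmultinomial
  refine ⟨habs, fun h => ?_⟩
  rw [h, abs_zero] at habs
  exact absurd habs.symm (by positivity)

/-- For integers `N ≥ 1` and `t ≥ 0`, the coefficient of the monomial
`∏_{1 ≤ i ≤ N} x_i^{2(N-1)+i-1+t}` in `∏_{1 ≤ i < j ≤ N} (x_i - x_j)^5 · ∏_i x_i^t`
has absolute value `(3N)! / (N! · 6^N)`; in particular it is nonzero.
(Here the variable `i : Fin N` corresponds to the index `i + 1 ∈ {1, …, N}`.) -/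
theorem statement_11 (N t : ℕ) (hN : 1 ≤ N) :
    |MvPolynomial.coeff
        (Finsupp.equivFunOnFinite.symm fun i : Fin N => 2 * (N - 1) + i.1 + t)
        ((∏ i : Fin N, ∏ j ∈ Finset.Ioi i, (X i - X j) ^ 5) *
          ∏ i : Fin N, (X i) ^ t : MvPolynomial (Fin N) ℝ)| =
      ((3 * N).factorial : ℝ) / ((N.factorial : ℝ) * (6 : ℝ) ^ N) ∧
    MvPolynomial.coeff
        (Finsupp.equivFunOnFinite.symm fun i : Fin N => 2 * (N - 1) + i.1 + t)
        ((∏ i : Fin N, ∏ j ∈ Finset.Ioi i, (X i - X j) ^ 5) *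
          ∏ i : Fin N, (X i) ^ t : MvPolynomial (Fin N) ℝ) ≠ 0 :=
  statement_11_general N t
end

section
/- For all integers N ≥ 1 and t ≥ 0, the coefficient of the monomial ∏_{1 ≤ i ≤ N} x_i^{2((N−1)+i−1)+t} in the polynomial ∏_{1 ≤ i < j ≤ N} (x_i^2 − x_j^2)^3 · ∏_{1 ≤ i ≤ N} x_i^t is nonzero. -/
/-!
The coefficient is the image of an integer, so it suffices to show that it is `1` modulo `2`.
In characteristic `2` we have `x_i² - x_j² = x_i² + x_j²`, and `∏_{i<j} (y_i + y_j)` is the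
Vandermonde determinant, which there equals the permanent `∑_σ ∏_i y_i^{σ(i)}`. With `U` this sum
for `y = x²`, the polynomial is `U² · U · ∏_i x_i^t`, and `U² = ∑_σ ∏_i x_i^{4σ(i)}` by Frobenius.
The coefficient therefore counts, mod `2`, the pairs of permutations with
`2σ(i) + ρ(i) = N - 1 + i` for all `i`; a sum-of-squares argument shows that `σ = id` and
`ρ = rev` is the only one.
-/

open MvPolynomial

section

open Finset Equiv Matrix

theorem eq_of_two_mul_add_eq_of_sum_sq_eq {ι R : Type*} [CommRing R] [LinearOrder R]
    [IsStrictOrderedRing R] {s : Finset ι} {a b c : ι → R}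
    (ha : ∑ i ∈ s, a i ^ 2 = ∑ i ∈ s, b i ^ 2)
    (hc : ∑ i ∈ s, c i ^ 2 = ∑ i ∈ s, b i ^ 2) (h : ∀ i ∈ s, 2 * a i + c i = b i) :
    ∀ i ∈ s, a i = b i := by
  have hsum : ∑ i ∈ s, 2 * (a i - b i) ^ 2 = 0 :=
    calc ∑ i ∈ s, 2 * (a i - b i) ^ 2
        = ∑ i ∈ s, ((c i ^ 2 - b i ^ 2) + 2 * (b i ^ 2 - a i ^ 2)) :=
          sum_congr rfl fun i hi => by rw [← h i hi]; ring
      _ = 0 := by simp only [sum_add_distrib, sum_sub_distrib, ← mul_sum, ha, hc, sub_self,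
                    mul_zero, add_zero]
  intro i hi
  have := (sum_eq_zero_iff_of_nonneg fun j _ => by positivity).mp hsum i hi
  simpa [sub_eq_zero] using this

theorem two_mul_perm_add_perm_eq_iff {N : ℕ} (σ ρ : Perm (Fin N)) :
    (∀ i : Fin N, 2 * (σ i : ℕ) + ρ i = N - 1 + i) ↔ σ = 1 ∧ ρ = Fin.revPerm := by
  constructor
  · intro h
    -- centring at `(N - 1) / 2` turns the hypothesis into `2 a + c = b`,
    -- where `a`, `b`, `c` are permutations of one sequence
    let f : Fin N → ℤ := fun j => 2 * (j : ℤ) - ((N - 1 : ℕ) : ℤ)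
    have hperm (π : Perm (Fin N)) : ∑ i, f (π i) ^ 2 = ∑ i, f i ^ 2 :=
      Equiv.sum_comp π (f · ^ 2)
    have hcentred : ∀ i ∈ univ, 2 * f (σ i) + f (ρ i) = f i := fun i _ => by
      have := h i
      simp only [f]
      omega
    have hσ : ∀ i, σ i = i := fun i => by
      have := eq_of_two_mul_add_eq_of_sum_sq_eq (hperm σ) (hperm ρ) hcentred i (mem_univ i)
      simp only [f] at this
      exact Fin.ext (by omega)
    refine ⟨Equiv.ext hσ, Equiv.ext fun i => Fin.ext ?_⟩
    have := h i
    rw [hσ i] at this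
    rw [Fin.revPerm_apply, Fin.val_rev]
    omega
  · rintro ⟨rfl, rfl⟩ i
    rw [Fin.revPerm_apply, Fin.val_rev, Perm.one_apply]
    omega

theorem prod_Ioi_add_eq_sum_perm {R : Type*} [CommRing R] [CharP R 2] {N : ℕ} (v : Fin N → R) :
    ∏ i, ∏ j ∈ Ioi i, (v i + v j) = ∑ σ : Perm (Fin N), ∏ i, v i ^ (σ i : ℕ) := by
  calc ∏ i, ∏ j ∈ Ioi i, (v i + v j)
      = (Matrix.vandermonde v)ᵀ.det := by
        rw [Matrix.det_transpose, Matrix.det_vandermonde]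
        simp only [CharTwo.sub_eq_add, add_comm]
    _ = ∑ σ : Perm (Fin N), (Perm.sign σ : R) * ∏ i, v i ^ (σ i : ℕ) := Matrix.det_apply' _
    _ = ∑ σ : Perm (Fin N), ∏ i, v i ^ (σ i : ℕ) := by
        refine sum_congr rfl fun σ _ => ?_
        rcases Int.units_eq_one_or (Perm.sign σ) with hs | hs <;> simp [hs, CharTwo.neg_eq]

theorem prod_X_pow_eq_monomial_equivFunOnFinite {σ R : Type*} [Fintype σ] [CommSemiring R]
    (c : σ → ℕ) :
    ∏ i, (X i : MvPolynomial σ R) ^ c i = monomial (Finsupp.equivFunOnFinite.symm c) 1 := by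
  rw [← prod_X_pow_eq_monomial]
  exact (Finsupp.prod_fintype (Finsupp.equivFunOnFinite.symm c)
    (fun i e => (X i : MvPolynomial σ R) ^ e) fun _ => pow_zero _).symm

noncomputable def cubedSqDiffMulPow (R : Type*) [CommRing R] (N t : ℕ) : MvPolynomial (Fin N) R :=
  (∏ i : Fin N, ∏ j ∈ Ioi i, (X i ^ 2 - X j ^ 2) ^ 3) * ∏ i : Fin N, X i ^ t

theorem map_cubedSqDiffMulPow {R S : Type*} [CommRing R] [CommRing S] (f : R →+* S) (N t : ℕ) :
    map f (cubedSqDiffMulPow R N t) = cubedSqDiffMulPow S N t := by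
  simp only [cubedSqDiffMulPow, map_mul, map_prod, map_sub, map_pow, map_X]

theorem cubedSqDiffMulPow_eq_sum_perm {R : Type*} [CommRing R] [CharP R 2] (N t : ℕ) :
    cubedSqDiffMulPow R N t =
      ∑ σ : Perm (Fin N), ∑ ρ : Perm (Fin N), ∏ i, X i ^ (4 * (σ i : ℕ) + 2 * ρ i + t) := by
  set U : MvPolynomial (Fin N) R := ∏ i, ∏ j ∈ Ioi i, (X i ^ 2 + X j ^ 2)
  have hU : U = ∑ ρ : Perm (Fin N), ∏ i, X i ^ (2 * (ρ i : ℕ)) := by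
    simp only [U, prod_Ioi_add_eq_sum_perm, ← pow_mul]
  have hU2 : U ^ 2 = ∑ σ : Perm (Fin N), ∏ i, X i ^ (4 * (σ i : ℕ)) := by
    simp only [hU, sum_pow_char, ← prod_pow, ← pow_mul]
    ring_nf
  calc cubedSqDiffMulPow R N t = U ^ 2 * U * ∏ i, X i ^ t := by
        simp only [cubedSqDiffMulPow, U, CharTwo.sub_eq_add, prod_pow]
        ring
    _ = _ := by
        rw [hU2, hU]
        simp only [sum_mul, mul_sum, ← prod_mul_distrib, ← pow_add]
        exact sum_comm

theorem coeff_cubedSqDiffMulPow_of_charTwo {R : Type*} [CommRing R] [CharP R 2] (N t : ℕ) :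
    coeff (Finsupp.equivFunOnFinite.symm fun i : Fin N => 2 * ((N - 1) + i.1) + t)
      (cubedSqDiffMulPow R N t) = 1 := by
  classical
  have hexponent (σ ρ : Perm (Fin N)) :
      (Finsupp.equivFunOnFinite.symm fun i => 4 * (σ i : ℕ) + 2 * ρ i + t) =
          Finsupp.equivFunOnFinite.symm (fun i : Fin N => 2 * ((N - 1) + i.1) + t) ↔
        (σ, ρ) = (1, Fin.revPerm) := by
    rw [Equiv.apply_eq_iff_eq, Prod.mk.injEq, ← two_mul_perm_add_perm_eq_iff, funext_iff]
    refine forall_congr' fun i => ?_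
    omega
  simp only [cubedSqDiffMulPow_eq_sum_perm, prod_X_pow_eq_monomial_equivFunOnFinite, coeff_sum,
    coeff_monomial, hexponent]
  rw [← Fintype.sum_prod_type' fun σ ρ => if (σ, ρ) = (1, Fin.revPerm) then (1 : R) else 0]
  exact Fintype.sum_ite_eq' _ _

theorem coeff_cubedSqDiffMulPow_eq_intCast {R : Type*} [CommRing R] (N t : ℕ)
    (d : Fin N →₀ ℕ) :
    coeff d (cubedSqDiffMulPow R N t) = ((coeff d (cubedSqDiffMulPow ℤ N t) : ℤ) : R) := by
  rw [← map_cubedSqDiffMulPow (Int.castRingHom R), coeff_map]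
  rfl

end

theorem statement_12_general (N t : ℕ) :
    MvPolynomial.coeff
        (Finsupp.equivFunOnFinite.symm fun i : Fin N => 2 * ((N - 1) + i.1) + t)
        ((∏ i : Fin N, ∏ j ∈ Finset.Ioi i, ((X i) ^ 2 - (X j) ^ 2) ^ 3) *
          ∏ i : Fin N, (X i) ^ t : MvPolynomial (Fin N) ℝ) ≠ 0 := by
  change coeff _ (cubedSqDiffMulPow ℝ N t) ≠ 0
  have hmod2 := coeff_cubedSqDiffMulPow_of_charTwo (R := ZMod 2) N t
  rw [coeff_cubedSqDiffMulPow_eq_intCast] at hmod2 ⊢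
  refine Int.cast_ne_zero.mpr fun h => ?_
  rw [h, Int.cast_zero] at hmod2
  exact zero_ne_one hmod2

/-- For integers `N ≥ 1` and `t ≥ 0`, the coefficient of the monomial
`∏_{1 ≤ i ≤ N} x_i^{2((N-1)+i-1)+t}` in
`∏_{1 ≤ i < j ≤ N} (x_i² - x_j²)^3 · ∏_i x_i^t` is nonzero.
(Here the variable `i : Fin N` corresponds to the index `i + 1 ∈ {1, …, N}`.) -/
theorem statement_12 (N t : ℕ) (hN : 1 ≤ N) :
    MvPolynomial.coeff
        (Finsupp.equivFunOnFinite.symm fun i : Fin N => 2 * ((N - 1) + i.1) + t)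
        ((∏ i : Fin N, ∏ j ∈ Finset.Ioi i, ((X i) ^ 2 - (X j) ^ 2) ^ 3) *
          ∏ i : Fin N, (X i) ^ t : MvPolynomial (Fin N) ℝ) ≠ 0 :=
  statement_12_general N t
end
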